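/- Let N ≥ 6 and let B be the (N−3)×(N−3) Hessian matrix of f(r,y*) = r⁴ − 4r³ S + r² Q + r² (with S = ∑_{j=5}^N y_j, Q = ∑_{j=5}^N y_j²) evaluated at r₀ = (8N−34)^{−1/2}, y₀,i = 2r₀. Then B has eigenvalue 2r₀² with multiplicity at least N−5, and its remaining two eigenvalues λ₁, λ₂ are the roots of (λ − ∂²f/∂r²(r₀,y₀*))(λ − 2r₀²) = ∑_{j=5}^N (−12r₀² + 4r₀·y₀,j)², with min{λ₁, λ₂} < 0. In particular (r₀,y₀*) is a saddle point of f. -/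
import Mathlib

set_option maxHeartbeats 1000000


theorem stmt_11 {N : ℕ} (hN : 6 ≤ N)
    (r₀ : ℝ) (hr₀ : r₀ = 1 / Real.sqrt (8 * (N : ℝ) - 34))
    (y₀ : Fin (N - 4) → ℝ) (hy₀ : ∀ i, y₀ i = 2 * r₀)
    -- `B` is the Hessian of `f(r,y*) = r⁴ − 4r³S + r²Q + r²` at the critical point,
    -- index `0` corresponding to `r` and indices `1,…,N-4` to `y₅,…,y_N`
    (B : Matrix (Fin (N - 3)) (Fin (N - 3)) ℝ)
    (hB : ∀ i j : Fin (N - 3), B i j =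
      if i.val = 0 ∧ j.val = 0 then
        12 * r₀ ^ 2 - 24 * r₀ * (∑ l, y₀ l) + 2 * (∑ l, y₀ l ^ 2) + 2
      else if i.val = 0 then -12 * r₀ ^ 2 + 4 * r₀ * y₀ ⟨j.val - 1, by omega⟩
      else if j.val = 0 then -12 * r₀ ^ 2 + 4 * r₀ * y₀ ⟨i.val - 1, by omega⟩
      else if i = j then 2 * r₀ ^ 2 else 0) :
    N - 5 ≤ Module.finrank ℝ
        (Module.End.eigenspace (Matrix.toLin' B) (2 * r₀ ^ 2)) ∧
    ∃ l₁ l₂ : ℝ,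
      Module.End.HasEigenvalue (Matrix.toLin' B) l₁ ∧
      Module.End.HasEigenvalue (Matrix.toLin' B) l₂ ∧
      (l₁ - (12 * r₀ ^ 2 - 24 * r₀ * (∑ l, y₀ l) + 2 * (∑ l, y₀ l ^ 2) + 2)) *
          (l₁ - 2 * r₀ ^ 2) = ∑ j, (-12 * r₀ ^ 2 + 4 * r₀ * y₀ j) ^ 2 ∧
      (l₂ - (12 * r₀ ^ 2 - 24 * r₀ * (∑ l, y₀ l) + 2 * (∑ l, y₀ l ^ 2) + 2)) *
          (l₂ - 2 * r₀ ^ 2) = ∑ j, (-12 * r₀ ^ 2 + 4 * r₀ * y₀ j) ^ 2 ∧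
      min l₁ l₂ < 0 := by
  classical
  have hNR : (6 : ℝ) ≤ (N : ℝ) := by exact_mod_cast hN
  have hpos : (0 : ℝ) < 8 * (N : ℝ) - 34 := by linarith
  have hr0pos : 0 < r₀ := by
    rw [hr₀]; positivity
  have hr2 : r₀ ^ 2 * (8 * (N : ℝ) - 34) = 1 := by
    rw [hr₀, div_pow, one_pow, Real.sq_sqrt hpos.le]
    field_simp
  have hr4 : r₀ ^ 4 * (8 * (N : ℝ) - 34) = r₀ ^ 2 := by
    linear_combination r₀ ^ 2 * hr2
  set a := 12 * r₀ ^ 2 - 24 * r₀ * (∑ l, y₀ l) + 2 * (∑ l, y₀ l ^ 2) + 2 with ha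
  set d := 2 * r₀ ^ 2 with hd
  set K := ((N : ℝ) - 4) * (16 * r₀ ^ 4) with hKdef
  have h4N : 4 ≤ N := by omega
  have hcast4 : ((N - 4 : ℕ) : ℝ) = (N : ℝ) - 4 := by
    rw [Nat.cast_sub h4N]; norm_num
  have hS : (∑ l, y₀ l) = ((N : ℝ) - 4) * (2 * r₀) := by
    rw [Finset.sum_congr rfl fun l _ => hy₀ l, Finset.sum_const, Finset.card_univ,
      Fintype.card_fin, nsmul_eq_mul, hcast4]
  have hQ : (∑ l, y₀ l ^ 2) = ((N : ℝ) - 4) * (4 * r₀ ^ 2) := by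
    have : ∀ l : Fin (N - 4), y₀ l ^ 2 = 4 * r₀ ^ 2 := fun l => by rw [hy₀]; ring
    rw [Finset.sum_congr rfl fun l _ => this l, Finset.sum_const, Finset.card_univ,
      Fintype.card_fin, nsmul_eq_mul, hcast4]
  have hK : (∑ j, (-12 * r₀ ^ 2 + 4 * r₀ * y₀ j) ^ 2) = K := by
    have : ∀ j : Fin (N - 4), (-12 * r₀ ^ 2 + 4 * r₀ * y₀ j) ^ 2 = 16 * r₀ ^ 4 :=
      fun j => by rw [hy₀]; ring
    rw [Finset.sum_congr rfl fun j _ => this j, Finset.sum_const, Finset.card_univ,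
      Fintype.card_fin, nsmul_eq_mul, hcast4, hKdef]
  have hA : a = 12 * r₀ ^ 2 - 40 * ((N : ℝ) - 4) * r₀ ^ 2 + 2 := by
    rw [ha, hS, hQ]; ring
  set z : Fin (N - 3) := ⟨0, by omega⟩ with hz
  set o : Fin (N - 3) := ⟨1, by omega⟩ with ho
  have hoz : o ≠ z := by
    intro h; exact absurd (congrArg Fin.val h) (by simp [hz, ho])
  -- entries of B
  have hB00 : B z z = a := by rw [hB z z]; simp [hz]
  have hB0j : ∀ j : Fin (N - 3), j ≠ z → B z j = -4 * r₀ ^ 2 := by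
    intro j hj
    have hjv : j.val ≠ 0 := fun h => hj (Fin.ext h)
    rw [hB z j, if_neg (by simp [hz, hjv]), if_pos rfl, hy₀]
    ring
  have hBi0 : ∀ i : Fin (N - 3), i ≠ z → B i z = -4 * r₀ ^ 2 := by
    intro i hi
    have hiv : i.val ≠ 0 := fun h => hi (Fin.ext h)
    rw [hB i z, if_neg (by simp [hiv]), if_neg hiv, if_pos rfl, hy₀]
    ring
  have hBii : ∀ i : Fin (N - 3), i ≠ z → B i i = d := by
    intro i hi
    have hiv : i.val ≠ 0 := fun h => hi (Fin.ext h)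
    rw [hB i i, if_neg (by simp [hiv]), if_neg hiv, if_neg hiv, if_pos rfl]
  have hBoff : ∀ i j : Fin (N - 3), i ≠ z → j ≠ z → i ≠ j → B i j = 0 := by
    intro i j hi hj hij
    have hiv : i.val ≠ 0 := fun h => hi (Fin.ext h)
    have hjv : j.val ≠ 0 := fun h => hj (Fin.ext h)
    rw [hB i j, if_neg (by simp [hiv]), if_neg hiv, if_neg hjv, if_neg hij]
  have hcard_erase : ((Finset.univ.erase z).card : ℝ) = (N : ℝ) - 4 := by
    rw [Finset.card_erase_of_mem (Finset.mem_univ z), Finset.card_univ, Fintype.card_fin]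
    rw [show N - 3 - 1 = N - 4 from by omega, Nat.cast_sub h4N]; norm_num
  -- Part 2 machinery: eigenvalue from root of the quadratic
  have main : ∀ lam : ℝ, (lam - a) * (lam - d) = K →
      Module.End.HasEigenvalue (Matrix.toLin' B) lam := by
    intro lam hroot
    set v : Fin (N - 3) → ℝ := fun i => if i = z then lam - d else -4 * r₀ ^ 2 with hv
    have hvz : v z = lam - d := by simp [hv]
    have hvne : ∀ i : Fin (N - 3), i ≠ z → v i = -4 * r₀ ^ 2 := by
      intro i hi; simp [hv, hi]
    apply Module.End.hasEigenvalue_of_hasEigenvector (x := v)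
    constructor
    · rw [Module.End.mem_eigenspace_iff, Matrix.toLin'_apply]
      funext i
      rw [Pi.smul_apply, smul_eq_mul]
      show ∑ j, B i j * v j = lam * v i
      by_cases hi : i = z
      · subst hi
        rw [← Finset.add_sum_erase _ _ (Finset.mem_univ z)]
        have hconst : ∀ j ∈ Finset.univ.erase z, B z j * v j = 16 * r₀ ^ 4 := by
          intro j hj
          have hj' : j ≠ z := Finset.ne_of_mem_erase hj
          rw [hB0j j hj', hvne j hj']; ring
        rw [Finset.sum_congr rfl hconst, Finset.sum_const, nsmul_eq_mul, hcard_erase,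
          hB00, hvz]
        linear_combination -hroot
      · rw [← Finset.add_sum_erase _ _ (Finset.mem_univ z),
          ← Finset.add_sum_erase _ _ (Finset.mem_erase.2 ⟨hi, Finset.mem_univ i⟩)]
        have hrest : ∑ j ∈ (Finset.univ.erase z).erase i, B i j * v j = 0 := by
          apply Finset.sum_eq_zero
          intro j hj
          have hji : j ≠ i := Finset.ne_of_mem_erase hj
          have hjz : j ≠ z := Finset.ne_of_mem_erase (Finset.mem_of_mem_erase hj)
          rw [hBoff i j hi hjz (Ne.symm hji)]; ring
        rw [hrest, hBi0 i hi, hBii i hi, hvz, hvne i hi]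
        ring
    · intro h0
      have := congrFun h0 o
      rw [hvne o hoz] at this
      have h2 : (0:ℝ) < r₀ ^ 2 := pow_pos hr0pos 2
      simp at this
      linarith
  -- the two roots
  set s : ℝ := Real.sqrt ((a - d) ^ 2 + 4 * K) with hsdef
  have hKpos : 0 < K := by
    have h4 : (0:ℝ) < (N : ℝ) - 4 := by linarith
    rw [hKdef]
    positivity
  have hs2 : s ^ 2 = (a - d) ^ 2 + 4 * K := Real.sq_sqrt (by nlinarith [sq_nonneg (a - d)])
  have hsnn : 0 ≤ s := Real.sqrt_nonneg _
  set l₁ : ℝ := ((a + d) - s) / 2 with hl1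
  set l₂ : ℝ := ((a + d) + s) / 2 with hl2
  have hroot1 : (l₁ - a) * (l₁ - d) = K := by
    rw [hl1]; linear_combination hs2 / 4
  have hroot2 : (l₂ - a) * (l₂ - d) = K := by
    rw [hl2]; linear_combination hs2 / 4
  have hprod : l₁ * l₂ = a * d - K := by
    rw [hl1, hl2]; linear_combination (-1/4 : ℝ) * hs2
  have hadK : a * d - K < 0 := by
    have key : a * d - K = r₀ ^ 4 * (272 - 64 * (N : ℝ)) := by
      rw [hA, hd, hKdef]; linear_combination -4 * hr4
    have h4' : (0:ℝ) < r₀ ^ 4 := pow_pos hr0pos 4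
    rw [key]
    nlinarith
  have hle : l₁ ≤ l₂ := by rw [hl1, hl2]; linarith
  have hl1neg : l₁ < 0 := by
    by_contra h
    push_neg at h
    have : 0 ≤ l₁ * l₂ := mul_nonneg h (le_trans h hle)
    linarith
  constructor
  · -- eigenspace dimension
    set g : (Fin (N - 3) → ℝ) →ₗ[ℝ] (Fin (N - 3) → ℝ) :=
      Matrix.toLin' B - d • LinearMap.id with hg
    have heig : Module.End.eigenspace (Matrix.toLin' B) d = LinearMap.ker g := by
      ext x
      rw [Module.End.mem_eigenspace_iff, LinearMap.mem_ker, hg, LinearMap.sub_apply,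
        LinearMap.smul_apply, LinearMap.id_apply, sub_eq_zero]
    set p : Fin (N - 3) → ℝ := fun i => if i = z then a - d else -4 * r₀ ^ 2 with hp
    set q : Fin (N - 3) → ℝ := fun i => if i = z then -4 * r₀ ^ 2 else 0 with hq
    have hrange : LinearMap.range g ≤ Submodule.span ℝ (Set.range ![p, q]) := by
      rintro _ ⟨x, rfl⟩
      rw [Submodule.mem_span_range_iff_exists_fun]
      refine ⟨![x z, ∑ j ∈ Finset.univ.erase z, x j], ?_⟩
      rw [Fin.sum_univ_two]
      simp only [Matrix.cons_val_zero, Matrix.cons_val_one, Matrix.head_cons]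
      funext i
      rw [Pi.add_apply, Pi.smul_apply, Pi.smul_apply, smul_eq_mul, smul_eq_mul]
      have hgx : g x i = (∑ j, B i j * x j) - d * x i := by
        rw [hg]; simp [Matrix.toLin'_apply, Matrix.mulVec, dotProduct]
      by_cases hi : i = z
      · subst hi
        have hrow : (∑ j, B z j * x j)
            = a * x z + (-4 * r₀ ^ 2) * ∑ j ∈ Finset.univ.erase z, x j := by
          rw [← Finset.add_sum_erase _ (fun j => B z j * x j) (Finset.mem_univ z), hB00]
          congr 1
          rw [Finset.mul_sum]
          exact Finset.sum_congr rfl fun j hj => by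
            rw [hB0j j (Finset.ne_of_mem_erase hj)]
        rw [hgx, hrow]
        simp only [hp, hq, if_pos rfl]
        ring
      · have hrow : (∑ j, B i j * x j) = B i z * x z + d * x i := by
          have hrest : ∑ j ∈ (Finset.univ.erase z).erase i, B i j * x j = 0 := by
            apply Finset.sum_eq_zero
            intro j hj
            have hji : j ≠ i := Finset.ne_of_mem_erase hj
            have hjz : j ≠ z := Finset.ne_of_mem_erase (Finset.mem_of_mem_erase hj)
            rw [hBoff i j hi hjz (Ne.symm hji)]; ring
          rw [← Finset.add_sum_erase _ (fun j => B i j * x j) (Finset.mem_univ z),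
            ← Finset.add_sum_erase _ (fun j => B i j * x j)
              (Finset.mem_erase.2 ⟨hi, Finset.mem_univ i⟩), hrest, hBii i hi, add_zero]
        rw [hgx, hrow, hBi0 i hi]
        simp only [hp, hq, if_neg hi]
        ring
    have hfr2 : Module.finrank ℝ (Submodule.span ℝ (Set.range ![p, q])) ≤ 2 := by
      simpa [Set.finrank] using finrank_range_le_card (R := ℝ) ![p, q]
    have hfr : Module.finrank ℝ (LinearMap.range g) ≤ 2 :=
      (Submodule.finrank_mono hrange).trans hfr2
    have hrn := LinearMap.finrank_range_add_finrank_ker g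
    rw [Module.finrank_fin_fun] at hrn
    rw [heig]
    omega
  · refine ⟨l₁, l₂, main l₁ hroot1, main l₂ hroot2, ?_, ?_, ?_⟩
    · rw [hK]; exact hroot1
    · rw [hK]; exact hroot2
    · rw [min_eq_left hle]; exact hl1neg
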